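/- arXiv:1412.4311 — 2 statements merged into one kernel-verified Lean document; each statement's English description precedes it below -/
import Mathlib

section
/- Let D = Dⁿ ∪ Dˣ be a database instance, Q a monotone Boolean query, and t ∈ Dⁿ. (a) If DF^s(t) = ∅, then ρ(t) = 0. (b) Otherwise, ρ(t) = 1/|s|, where s ∈ DF^s(t) and there is no s' ∈ DF^s(t) with |s'| < |s|. (Proposition 2) -/
open scoped Classical

variable {α : Type*} [DecidableEq α]

/-- A monotone Boolean query on database instances (finite sets of tuples). -/
def MonotoneQuery (Q : Finset α → Prop) : Prop :=
  ∀ ⦃X Y : Finset α⦄, X ⊆ Y → Q X → Q Y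

/-- `Γ` is a contingency set for tuple `t` wrt query `Q`, instance `D`,
endogenous part `Dn`. -/
def IsContingency (D Dn : Finset α) (Q : Finset α → Prop) (t : α) (Γ : Finset α) : Prop :=
  Γ ⊆ Dn ∧ t ∉ Γ ∧ Q (D \ Γ) ∧ ¬ Q (D \ (Γ ∪ {t}))

/-- `t` is an actual cause for `Q`. -/
def IsActualCause (D Dn : Finset α) (Q : Finset α → Prop) (t : α) : Prop :=
  t ∈ Dn ∧ ∃ Γ : Finset α, IsContingency D Dn Q t Γ

/-- Minimum cardinality of a contingency set for `t`. -/
noncomputable def minContingency (D Dn : Finset α) (Q : Finset α → Prop) (t : α) : ℕ :=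
  sInf {m : ℕ | ∃ Γ : Finset α, IsContingency D Dn Q t Γ ∧ Γ.card = m}

/-- Responsibility of `t`: `1/(1+m)` with `m` the minimum size of a contingency set,
and `0` if `t` is not an actual cause. -/
noncomputable def resp (D Dn : Finset α) (Q : Finset α → Prop) (t : α) : ℚ :=
  if IsActualCause D Dn Q t then 1 / (1 + (minContingency D Dn Q t : ℚ)) else 0

/-- `t` is a most responsible actual cause. -/
def IsMostResponsibleCause (D Dn : Finset α) (Q : Finset α → Prop) (t : α) : Prop :=
  IsActualCause D Dn Q t ∧ ∀ t' : α, ¬ resp D Dn Q t < resp D Dn Q t'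

/-- `D'` is an S-repair of `D` wrt the denial constraint `¬ Q`. -/
def IsSRepair (D : Finset α) (Q : Finset α → Prop) (D' : Finset α) : Prop :=
  D' ⊆ D ∧ ¬ Q D' ∧ ∀ D'' : Finset α, D'' ⊆ D → ¬ Q D'' → D' ⊆ D'' → D'' = D'

/-- `D'` is a C-repair of `D` wrt the denial constraint `¬ Q`. -/
def IsCRepair (D : Finset α) (Q : Finset α → Prop) (D' : Finset α) : Prop :=
  D' ⊆ D ∧ ¬ Q D' ∧ ∀ D'' : Finset α, D'' ⊆ D → ¬ Q D'' → D''.card ≤ D'.card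

/-- `Γ ∈ CT(t)`: `Γ` is an S-minimal contingency set for `t`. -/
def InCT (D Dn : Finset α) (Q : Finset α → Prop) (t : α) (Γ : Finset α) : Prop :=
  IsContingency D Dn Q t Γ ∧ ∀ Γ'' : Finset α, Γ'' ⊂ Γ → Q (D \ (Γ'' ∪ {t}))

/-- `𝔖(D)`: S-minimal subsets of `D` satisfying `Q`. -/
def Sfam (D : Finset α) (Q : Finset α → Prop) : Set (Finset α) :=
  {s | s ⊆ D ∧ Q s ∧ ∀ s' : Finset α, s' ⊂ s → ¬ Q s'}

/-- Subsets of `Dn` contained in some `s' ∈ 𝔖(D)` whose remainder is exogenous. -/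
def SnPre (D Dn Dx : Finset α) (Q : Finset α → Prop) : Set (Finset α) :=
  {s | s ⊆ Dn ∧ ∃ s' ∈ Sfam D Q, s ⊆ s' ∧ s' \ s ⊆ Dx}

/-- `𝔖ⁿ(D)`: the inclusion-minimal elements of `SnPre`. -/
def SnFam (D Dn Dx : Finset α) (Q : Finset α → Prop) : Set (Finset α) :=
  {s ∈ SnPre D Dn Dx Q | ∀ s' ∈ SnPre D Dn Dx Q, s' ⊆ s → s' = s}

/-- `H` is a hitting set for `𝔖ⁿ(D)`. -/
def IsHittingSet (D Dn Dx : Finset α) (Q : Finset α → Prop) (H : Finset α) : Prop :=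
  H ⊆ Dn ∧ ∀ s ∈ SnFam D Dn Dx Q, (H ∩ s).Nonempty

/-- `H` is an S-minimal hitting set for `𝔖ⁿ(D)`. -/
def IsSMinimalHittingSet (D Dn Dx : Finset α) (Q : Finset α → Prop) (H : Finset α) : Prop :=
  IsHittingSet D Dn Dx Q H ∧ ∀ H' : Finset α, H' ⊂ H → ¬ IsHittingSet D Dn Dx Q H'

/-- `H` is a minimum-cardinality hitting set for `𝔖ⁿ(D)`. -/
def IsMinimumHittingSet (D Dn Dx : Finset α) (Q : Finset α → Prop) (H : Finset α) : Prop :=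
  IsHittingSet D Dn Dx Q H ∧ ∀ H' : Finset α, IsHittingSet D Dn Dx Q H' → H.card ≤ H'.card

/-- `Δ` is a diagnosis for the diagnosis problem associated with `Q`. -/
def IsDiagnosis (D Dn : Finset α) (Q : Finset α → Prop) (Δ : Finset α) : Prop :=
  Δ ⊆ Dn ∧ ¬ Q (D \ Δ)

/-- `Δ ∈ 𝒟(ℳ,t)`: `Δ` is an inclusion-minimal diagnosis containing `t`. -/
def IsMinimalDiagnosisWith (D Dn : Finset α) (Q : Finset α → Prop) (t : α)
    (Δ : Finset α) : Prop :=
  IsDiagnosis D Dn Q Δ ∧ t ∈ Δ ∧ ∀ Δ' : Finset α, Δ' ⊂ Δ → ¬ IsDiagnosis D Dn Q Δ'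

/-- `Δ ∈ MCD(ℳ,t)`: `Δ` is an element of `𝒟(ℳ,t)` of minimum cardinality. -/
def IsMCDWith (D Dn : Finset α) (Q : Finset α → Prop) (t : α) (Δ : Finset α) : Prop :=
  IsMinimalDiagnosisWith D Dn Q t Δ ∧
    ∀ Δ' : Finset α, IsMinimalDiagnosisWith D Dn Q t Δ' → Δ.card ≤ Δ'.card

/-!
A contingency set `Γ` for `t` gives an S-repair `D' ⊇ D \ (Γ ∪ {t})`; monotonicity of `Q` forces
`t ∉ D'` (otherwise `D \ Γ ⊆ D'`), so `t ∈ D \ D' ⊆ Γ ∪ {t}`. Conversely, if `D'` is an S-repair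
with `t ∈ D \ D' ⊆ Dⁿ`, then `(D \ D') \ {t}` is a contingency set for `t`: removing it leaves
`D' ∪ {t}`, which satisfies `Q` by maximality of `D'`. Hence the minimum size of a contingency set
is one less than the minimum size of an element of `DF^s(t)`.
-/

theorem exists_isSRepair_superset {β : Type*} {D X : Finset β} {Q : Finset β → Prop}
    (hXD : X ⊆ D) (hX : ¬ Q X) : ∃ D', IsSRepair D Q D' ∧ X ⊆ D' := by
  have hfin : {Y : Finset β | Y ⊆ D ∧ ¬ Q Y}.Finite :=
    (D.powerset : Set (Finset β)).toFinite.subset fun Y hY => Finset.mem_powerset.2 hY.1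
  obtain ⟨D', hXD', ⟨hD'D, hD'⟩, hmax⟩ := hfin.exists_le_maximal ⟨hXD, hX⟩
  exact ⟨D', ⟨hD'D, hD', fun D'' hD''D hD'' hle => le_antisymm (hmax ⟨hD''D, hD''⟩ hle) hle⟩, hXD'⟩

namespace IsContingency

variable {D Dn Γ : Finset α} {Q : Finset α → Prop} {t : α}

theorem mem (h : IsContingency D Dn Q t Γ) : t ∈ D := by
  by_contra htD
  have hsame : D \ (Γ ∪ {t}) = D \ Γ := by
    ext x
    by_cases hx : x = t <;> simp_all
  exact h.2.2.2 (hsame ▸ h.2.2.1)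

theorem exists_isSRepair (h : IsContingency D Dn Q t Γ) (hmono : MonotoneQuery Q) :
    ∃ D', IsSRepair D Q D' ∧ t ∈ D \ D' ∧ D \ D' ⊆ insert t Γ := by
  have htD := h.mem
  obtain ⟨-, -, hQ, hnQ⟩ := h
  obtain ⟨D', hrep, hsub⟩ := exists_isSRepair_superset Finset.sdiff_subset hnQ
  have hmem (x : α) (hxD : x ∈ D) (hx : x ∉ insert t Γ) : x ∈ D' :=
    hsub (by simp_all)
  have htD' : t ∉ D' := fun htD' => hrep.2.1 <| hmono (fun x hx => by
    rw [Finset.mem_sdiff] at hx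
    by_cases hxt : x = t
    · exact hxt ▸ htD'
    · exact hmem x hx.1 (by simp [hxt, hx.2])) hQ
  refine ⟨D', hrep, Finset.mem_sdiff.2 ⟨htD, htD'⟩, fun x hx => ?_⟩
  rw [Finset.mem_sdiff] at hx
  by_contra hxΓ
  exact hx.2 (hmem x hx.1 hxΓ)

end IsContingency

theorem IsSRepair.isContingency_erase {D Dn D' : Finset α} {Q : Finset α → Prop} {t : α}
    (hrep : IsSRepair D Q D') (ht : t ∈ D \ D') (hsub : D \ D' ⊆ Dn) :
    IsContingency D Dn Q t ((D \ D').erase t) := by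
  obtain ⟨htD, htD'⟩ := Finset.mem_sdiff.1 ht
  refine ⟨(Finset.erase_subset _ _).trans hsub, Finset.notMem_erase _ _, ?_, ?_⟩
  · rw [Finset.sdiff_erase htD, Finset.sdiff_sdiff_eq_self hrep.1]
    by_contra hQ
    exact htD' (hrep.2.2 _ (Finset.insert_subset htD hrep.1) hQ (Finset.subset_insert _ _) ▸
      Finset.mem_insert_self t D')
  · rw [Finset.union_comm, ← Finset.insert_eq, Finset.insert_erase ht,
      Finset.sdiff_sdiff_eq_self hrep.1]
    exact hrep.2.1

section minContingency

variable {D Dn Γ : Finset α} {Q : Finset α → Prop} {t : α}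

theorem minContingency_le (h : IsContingency D Dn Q t Γ) : minContingency D Dn Q t ≤ Γ.card :=
  Nat.sInf_le ⟨Γ, h, rfl⟩

theorem exists_isContingency_card_eq_minContingency (h : IsContingency D Dn Q t Γ) :
    ∃ Γ', IsContingency D Dn Q t Γ' ∧ Γ'.card = minContingency D Dn Q t :=
  Nat.sInf_mem (s := {m | ∃ Γ, IsContingency D Dn Q t Γ ∧ Γ.card = m}) ⟨Γ.card, Γ, h, rfl⟩

end minContingency

theorem resp_via_srepairs_general (D Dn : Finset α) (Q : Finset α → Prop)
    (hmono : MonotoneQuery Q) (t : α) :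
    ((¬ ∃ D' : Finset α, IsSRepair D Q D' ∧ t ∈ D \ D' ∧ D \ D' ⊆ Dn) →
        resp D Dn Q t = 0) ∧
    (∀ D' : Finset α, IsSRepair D Q D' → t ∈ D \ D' → D \ D' ⊆ Dn →
      (¬ ∃ D'' : Finset α, IsSRepair D Q D'' ∧ t ∈ D \ D'' ∧ D \ D'' ⊆ Dn ∧
          (D \ D'').card < (D \ D').card) →
      resp D Dn Q t = 1 / ((D \ D').card : ℚ)) := by
  constructor
  · intro hno
    rw [resp, if_neg]
    rintro ⟨htn, Γ, hΓ⟩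
    obtain ⟨D', hrep, htD', hsub⟩ := hΓ.exists_isSRepair hmono
    exact hno ⟨D', hrep, htD', hsub.trans (Finset.insert_subset htn hΓ.1)⟩
  · intro D' hrep ht hsub hmin
    have hΓ₀ := hrep.isContingency_erase ht hsub
    have hupper := minContingency_le hΓ₀
    obtain ⟨Γ, hΓ, hΓcard⟩ := exists_isContingency_card_eq_minContingency hΓ₀
    obtain ⟨D'', hrep'', ht'', hsub''⟩ := hΓ.exists_isSRepair hmono
    have hlower : (D \ D').card ≤ (D \ D'').card := not_lt.1 fun hlt =>
      hmin ⟨D'', hrep'', ht'', hsub''.trans (Finset.insert_subset (hsub ht) hΓ.1), hlt⟩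
    have hcard : (D \ D').card = minContingency D Dn Q t + 1 := by
      have h₁ := Finset.card_le_card hsub''
      have h₂ := Finset.card_insert_le t Γ
      have h₃ := Finset.card_erase_add_one ht
      omega
    rw [resp, if_pos ⟨hsub ht, _, hΓ₀⟩, hcard]
    push_cast
    ring

/-- Proposition 2: responsibility in terms of the differences with S-repairs. -/
theorem resp_via_srepairs (D Dn Dx : Finset α) (Q : Finset α → Prop)
    (hpart : D = Dn ∪ Dx) (hdisj : Disjoint Dn Dx) (hmono : MonotoneQuery Q)
    (t : α) (ht : t ∈ Dn) :
    ((¬ ∃ D' : Finset α, IsSRepair D Q D' ∧ t ∈ D \ D' ∧ D \ D' ⊆ Dn) →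
        resp D Dn Q t = 0) ∧
    (∀ D' : Finset α, IsSRepair D Q D' → t ∈ D \ D' → D \ D' ⊆ Dn →
      (¬ ∃ D'' : Finset α, IsSRepair D Q D'' ∧ t ∈ D \ D'' ∧ D \ D'' ⊆ Dn ∧
          (D \ D'').card < (D \ D').card) →
      resp D Dn Q t = 1 / ((D \ D').card : ℚ)) :=
  resp_via_srepairs_general D Dn Q hmono t
end

section
/- Let D be a database instance in which all tuples are endogenous and Q a monotone Boolean query. If a tuple t belongs to D and t is not a most responsible actual cause for Q, then t belongs to every C-repair of D with respect to ¬Q (i.e., the ground atomic query asserting t is C-consistently true). (Corollary 4) -/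
open scoped Classical

variable {α : Type*} [DecidableEq α]

/-
If `t ∉ D'` for a C-repair `D'`, maximality of `D'` forces `Q (insert t D')`, so
`D \ insert t D'` is a contingency set for `t` of size `|D| - |D'| - 1`. Conversely, for any
contingency set `Γ` of any tuple `t'`, the instance `D \ (Γ ∪ {t'})` falsifies `Q` and so has at
most `|D'|` tuples, giving `|Γ| ≥ |D| - |D'| - 1`. Hence `t` has a minimum-size contingency set
among all tuples, i.e. maximal responsibility.
-/

section Responsibility

variable {D Dn Γ : Finset α} {Q : Finset α → Prop} {t t' : α}

theorem minContingency_le_card (hΓ : IsContingency D Dn Q t Γ) :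
    minContingency D Dn Q t ≤ Γ.card :=
  Nat.sInf_le ⟨Γ, hΓ, rfl⟩

theorem IsActualCause.exists_card_eq_minContingency (ht : IsActualCause D Dn Q t) :
    ∃ Γ, IsContingency D Dn Q t Γ ∧ Γ.card = minContingency D Dn Q t := by
  obtain ⟨Γ, hΓ⟩ := ht.2
  exact Nat.sInf_mem (s := {m | ∃ Γ, IsContingency D Dn Q t Γ ∧ Γ.card = m}) ⟨_, Γ, hΓ, rfl⟩

theorem resp_le_resp_of_minContingency_le (ht : IsActualCause D Dn Q t)
    (h : IsActualCause D Dn Q t' → minContingency D Dn Q t ≤ minContingency D Dn Q t') :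
    resp D Dn Q t' ≤ resp D Dn Q t := by
  unfold resp
  by_cases ht' : IsActualCause D Dn Q t'
  · rw [if_pos ht', if_pos ht]
    apply one_div_le_one_div_of_le (by positivity)
    exact_mod_cast Nat.add_le_add_left (h ht') 1
  · rw [if_neg ht', if_pos ht]
    positivity

theorem isMostResponsibleCause_of_card_le (ht : t ∈ Dn) (hΓ : IsContingency D Dn Q t Γ)
    (hmin : ∀ t' Γ', IsContingency D Dn Q t' Γ' → Γ.card ≤ Γ'.card) :
    IsMostResponsibleCause D Dn Q t := by
  have hcause : IsActualCause D Dn Q t := ⟨ht, Γ, hΓ⟩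
  refine ⟨hcause, fun t' => not_lt.2 (resp_le_resp_of_minContingency_le hcause fun ht' => ?_)⟩
  obtain ⟨Γ', hΓ', hcard⟩ := ht'.exists_card_eq_minContingency
  exact hcard ▸ (minContingency_le_card hΓ).trans (hmin t' Γ' hΓ')

end Responsibility

namespace IsCRepair

variable {D Dn D' Γ : Finset α} {Q : Finset α → Prop} {t t' : α}

theorem card_le_card_add_card_contingency (hD' : IsCRepair D Q D')
    (hΓ : IsContingency D Dn Q t' Γ) : D.card ≤ D'.card + Γ.card + 1 :=
  calc D.card ≤ (D \ (Γ ∪ {t'})).card + (Γ ∪ {t'}).card := Finset.card_le_card_sdiff_add_card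
    _ ≤ D'.card + (Γ.card + 1) :=
      Nat.add_le_add (hD'.2.2 _ Finset.sdiff_subset hΓ.2.2.2) (Finset.card_union_le _ _)

theorem query_insert (hD' : IsCRepair D Q D') (ht : t ∈ D) (htD' : t ∉ D') :
    Q (insert t D') := by
  by_contra hQ
  have := hD'.2.2 _ (Finset.insert_subset ht hD'.1) hQ
  rw [Finset.card_insert_of_notMem htD'] at this
  omega

theorem isContingency_sdiff_insert (hD' : IsCRepair D Q D') (ht : t ∈ D) (htD' : t ∉ D') :
    IsContingency D D Q t (D \ insert t D') := by
  have hins : insert t D' ⊆ D := Finset.insert_subset ht hD'.1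
  refine ⟨Finset.sdiff_subset, fun h => (Finset.mem_sdiff.1 h).2 (Finset.mem_insert_self t D'),
    ?_, ?_⟩
  · rw [Finset.sdiff_sdiff_eq_self hins]
    exact hD'.query_insert ht htD'
  · rw [Finset.sdiff_insert, Finset.union_singleton,
      Finset.insert_erase (Finset.mem_sdiff.2 ⟨ht, htD'⟩), Finset.sdiff_sdiff_eq_self hD'.1]
    exact hD'.2.1

theorem isMostResponsibleCause_of_notMem (hD' : IsCRepair D Q D') (ht : t ∈ D)
    (htD' : t ∉ D') : IsMostResponsibleCause D D Q t := by
  have hins : insert t D' ⊆ D := Finset.insert_subset ht hD'.1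
  have hcard : (D \ insert t D').card + D'.card + 1 = D.card := by
    rw [← Finset.card_sdiff_add_card_eq_card hins, Finset.card_insert_of_notMem htD', add_assoc]
  refine isMostResponsibleCause_of_card_le ht (hD'.isContingency_sdiff_insert ht htD')
    fun t' Γ' hΓ' => ?_
  have := hD'.card_le_card_add_card_contingency hΓ'
  omega

end IsCRepair

theorem not_mrc_in_every_crepair_general (D : Finset α) (Q : Finset α → Prop)
    (t : α) (ht : t ∈ D)
    (hnot : ¬ IsMostResponsibleCause D D Q t) :
    ∀ D' : Finset α, IsCRepair D Q D' → t ∈ D' :=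
  fun _ hD' => by_contra fun htD' => hnot (hD'.isMostResponsibleCause_of_notMem ht htD')

/-- Corollary 4: a tuple of `D` that is not a most responsible actual cause
belongs to every C-repair. -/
theorem not_mrc_in_every_crepair (D : Finset α) (Q : Finset α → Prop)
    (hmono : MonotoneQuery Q) (t : α) (ht : t ∈ D)
    (hnot : ¬ IsMostResponsibleCause D D Q t) :
    ∀ D' : Finset α, IsCRepair D Q D' → t ∈ D' :=
  not_mrc_in_every_crepair_general D Q t ht hnot
end
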